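/- For every α ∈ R, the value Q(α) is an integer, i.e. there exists n ∈ ℤ with Q(α) = n. -/

import Mathlib

open Polynomial

noncomputable def P (μ : ℤ) : ℤ[X] := X ^ 4 - C μ * X ^ 3 - C (2 * μ) * X + 4

noncomputable abbrev Rg (μ : ℤ) := AdjoinRoot (P μ)

noncomputable def tau (μ : ℤ) : Rg μ := AdjoinRoot.root (P μ)

noncomputable def Q (μ : ℤ) (α : Rg μ) : ℝ :=
  (1 / 2) * (((P μ).map (Int.castRingHom ℂ)).roots.attach.map
    (fun z => ‖AdjoinRoot.lift (Int.castRingHom ℂ) z.1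
      (by
        have h2 : Polynomial.eval z.1 ((P μ).map (Int.castRingHom ℂ)) = 0 :=
          (Polynomial.mem_roots'.mp z.2).2
        rwa [Polynomial.eval_map] at h2) α‖ ^ 2)).sum

/-!
For `μ² ≤ 2`, `P` factors over `ℝ` as `(X² - s₁X + 2)(X² - s₂X + 2)` with `s₁ + s₂ = μ`,
`s₁s₂ = -4` and `s₁², s₂² ≤ 8`, so its complex roots are `w₁, w̄₁, w₂, w̄₂` with `wᵢw̄ᵢ = 2`.
Write `α = f(τ)` with `f = a + bX + cX² + dX³ ∈ ℤ[X]`. Each conjugate pair contributes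
`2|f(wᵢ)|² = 2 f(wᵢ) f(w̄ᵢ)`, which cancels the factor `1/2`, and since `wᵢw̄ᵢ = 2` the
symmetric expression `f(wᵢ) f(w̄ᵢ)` is an integral polynomial in `sᵢ = wᵢ + w̄ᵢ`. Summing it
over `i` gives an integral polynomial in `s₁ + s₂ = μ` and `s₁s₂ = -4`.
-/

open ComplexConjugate

theorem AdjoinRoot.exists_eq_sum_range {R : Type*} [CommRing R] {g : R[X]} (hg : g.Monic)
    (α : AdjoinRoot g) :
    ∃ c : ℕ → R, α = ∑ i ∈ Finset.range g.natDegree, c i • root g ^ i := by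
  obtain ⟨f, rfl⟩ := mk_surjective α
  rcases eq_or_ne g 1 with rfl | hg1
  · exact ⟨0, by simp [mk_eq_zero]⟩
  refine ⟨(f %ₘ g).coeff, ?_⟩
  conv_lhs => rw [← mk_leftInverse hg (mk g f), modByMonicHom_mk,
    as_sum_range_C_mul_X_pow' _ (natDegree_modByMonic_lt f hg hg1)]
  simp [map_sum, mk_C, mk_X, Algebra.smul_def]

theorem quadratic_eq_X_sub_C_mul_X_sub_C {R : Type*} [CommRing R] {u v q : R} (h : u * v = q) :
    X ^ 2 - C (u + v) * X + C q = (X - C u) * (X - C v) := by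
  rw [← h, C_add, C_mul]
  ring

section PowerSums

variable {R : Type*} [CommRing R] {s₁ s₂ m p : R}

theorem sq_add_sq_of_add_eq_of_mul_eq (hsum : s₁ + s₂ = m) (hprod : s₁ * s₂ = p) :
    s₁ ^ 2 + s₂ ^ 2 = m ^ 2 - 2 * p := by
  linear_combination (s₁ + s₂ + m) * hsum - 2 * hprod

theorem pow_three_add_pow_three_of_add_eq_of_mul_eq (hsum : s₁ + s₂ = m) (hprod : s₁ * s₂ = p) :
    s₁ ^ 3 + s₂ ^ 3 = m ^ 3 - 3 * p * m := by
  linear_combination ((s₁ + s₂) ^ 2 + (s₁ + s₂) * m + m ^ 2 - 3 * p) * hsum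
    - 3 * (s₁ + s₂) * hprod

end PowerSums

theorem cubic_mul_cubic_of_mul_eq {R : Type*} [CommRing R] (a b c d : R) {u v q : R}
    (h : u * v = q) :
    (a + b * u + c * u ^ 2 + d * u ^ 3) * (a + b * v + c * v ^ 2 + d * v ^ 3) =
      a ^ 2 + q * b ^ 2 + q ^ 2 * c ^ 2 + q ^ 3 * d ^ 2
        + (a * b + q * b * c + q ^ 2 * c * d) * (u + v)
        + (a * c + q * b * d) * ((u + v) ^ 2 - 2 * q)
        + a * d * ((u + v) ^ 3 - 3 * q * (u + v)) := by
  subst h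
  ring

theorem Complex.exists_add_conj_mul_conj {s q : ℝ} (h : s ^ 2 ≤ 4 * q) :
    ∃ w : ℂ, w + conj w = s ∧ w * conj w = q := by
  refine ⟨⟨s / 2, √(q - s ^ 2 / 4)⟩, ?_, ?_⟩
  · rw [add_conj]
    push_cast
    ring
  · rw [mul_conj, normSq_mk, Real.mul_self_sqrt (by linarith)]
    push_cast
    ring

theorem exists_add_eq_mul_eq_sq_le {m : ℝ} (hm : m ^ 2 ≤ 2) :
    ∃ s₁ s₂ : ℝ, s₁ + s₂ = m ∧ s₁ * s₂ = -4 ∧ s₁ ^ 2 ≤ 8 ∧ s₂ ^ 2 ≤ 8 := by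
  set r := √(m ^ 2 + 16)
  have hr : r ^ 2 = m ^ 2 + 16 := Real.sq_sqrt (by positivity)
  obtain ⟨hmr, hmr'⟩ : -(8 - m ^ 2) ≤ m * r ∧ m * r ≤ 8 - m ^ 2 :=
    abs_le_of_sq_le_sq' (by linear_combination m ^ 2 * hr + 32 * hm) (by linarith)
  refine ⟨(m + r) / 2, (m - r) / 2, by ring, by linear_combination -hr / 4, ?_, ?_⟩
  · linear_combination hr / 4 + hmr' / 2
  · linear_combination hr / 4 + hmr / 2

section Cubic

variable (a b c d : ℤ) (w : ℂ)

theorem conj_cubic :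
    conj (a + b * w + c * w ^ 2 + d * w ^ 3 : ℂ) =
      a + b * conj w + c * conj w ^ 2 + d * conj w ^ 3 := by
  simp

theorem norm_cubic_conj :
    ‖(a + b * conj w + c * conj w ^ 2 + d * conj w ^ 3 : ℂ)‖ =
      ‖(a + b * w + c * w ^ 2 + d * w ^ 3 : ℂ)‖ := by
  rw [← conj_cubic, Complex.norm_conj]

theorem ofReal_norm_cubic_sq :
    (‖(a + b * w + c * w ^ 2 + d * w ^ 3 : ℂ)‖ : ℂ) ^ 2 =
      (a + b * w + c * w ^ 2 + d * w ^ 3) * (a + b * conj w + c * conj w ^ 2 + d * conj w ^ 3) := by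
  rw [← conj_cubic, Complex.mul_conj, Complex.normSq_eq_norm_sq, Complex.ofReal_pow]

end Cubic

theorem monic_P (μ : ℤ) : (P μ).Monic := by
  unfold P
  monicity!

theorem natDegree_P (μ : ℤ) : (P μ).natDegree = 4 := by
  unfold P
  compute_degree!

theorem exists_eq_cubic_tau {μ : ℤ} (α : Rg μ) :
    ∃ a b c d : ℤ, α = a + b * tau μ + c * tau μ ^ 2 + d * tau μ ^ 3 := by
  obtain ⟨e, he⟩ := AdjoinRoot.exists_eq_sum_range (monic_P μ) α
  refine ⟨e 0, e 1, e 2, e 3, ?_⟩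
  simp [he, natDegree_P, Finset.sum_range_succ, zsmul_eq_mul, tau]

theorem Q_cubic_tau {μ : ℤ} (a b c d : ℤ) :
    Q μ (a + b * tau μ + c * tau μ ^ 2 + d * tau μ ^ 3) = 1 / 2 *
      (((P μ).map (Int.castRingHom ℂ)).roots.map
        fun z => ‖(a + b * z + c * z ^ 2 + d * z ^ 3 : ℂ)‖ ^ 2).sum := by
  simp only [Q, tau, AdjoinRoot.lift_root, map_add, map_mul, map_pow, map_intCast]
  congr 2
  exact Multiset.attach_map_val' _ fun z => ‖(a + b * z + c * z ^ 2 + d * z ^ 3 : ℂ)‖ ^ 2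

theorem map_P_eq_mul {R : Type*} [CommRing R] (μ : ℤ) {c₁ c₂ : R} (hsum : c₁ + c₂ = μ)
    (hprod : c₁ * c₂ = -4) :
    (P μ).map (Int.castRingHom R) = (X ^ 2 - C c₁ * X + C 2) * (X ^ 2 - C c₂ * X + C 2) := by
  have hsum' : C c₁ + C c₂ = C (μ : R) := by rw [← C_add, hsum]
  have hprod' : C c₁ * C c₂ = -4 := by rw [← C_mul, hprod, C_neg, C_ofNat]
  simp only [P, Polynomial.map_add, Polynomial.map_sub, Polynomial.map_mul, Polynomial.map_pow,
    Polynomial.map_X, Polynomial.map_C, Polynomial.map_ofNat, Int.coe_castRingHom, C_mul, C_ofNat]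
  linear_combination (X ^ 3 + 2 * X) * hsum' - X ^ 2 * hprod'

theorem exists_roots_map_P_eq {μ : ℤ} (hμ : μ ^ 2 ≤ 2) :
    ∃ w₁ w₂ : ℂ, ((P μ).map (Int.castRingHom ℂ)).roots = {w₁, conj w₁, w₂, conj w₂} ∧
      w₁ * conj w₁ = 2 ∧ w₂ * conj w₂ = 2 ∧
      (w₁ + conj w₁) + (w₂ + conj w₂) = μ ∧ (w₁ + conj w₁) * (w₂ + conj w₂) = -4 := by
  obtain ⟨s₁, s₂, hsum, hprod, hs₁, hs₂⟩ :=
    exists_add_eq_mul_eq_sq_le (m := μ) (by exact_mod_cast hμ)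
  obtain ⟨w₁, hw₁, hw₁'⟩ := Complex.exists_add_conj_mul_conj (s := s₁) (q := 2) (by linarith)
  obtain ⟨w₂, hw₂, hw₂'⟩ := Complex.exists_add_conj_mul_conj (s := s₂) (q := 2) (by linarith)
  push_cast at hw₁' hw₂'
  have hsumℂ : (w₁ + conj w₁) + (w₂ + conj w₂) = μ := by
    rw [hw₁, hw₂]
    exact_mod_cast hsum
  have hprodℂ : (w₁ + conj w₁) * (w₂ + conj w₂) = -4 := by
    rw [hw₁, hw₂]
    exact_mod_cast hprod
  refine ⟨w₁, w₂, ?_, hw₁', hw₂', hsumℂ, hprodℂ⟩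
  rw [map_P_eq_mul μ hsumℂ hprodℂ, quadratic_eq_X_sub_C_mul_X_sub_C hw₁',
    quadratic_eq_X_sub_C_mul_X_sub_C hw₂', ← roots_multiset_prod_X_sub_C {w₁, conj w₁, w₂, conj w₂}]
  simp [mul_assoc]

/-- The squared norm `Q` takes integer values on `R`. -/
theorem stmt12 (μ : ℤ) (hμ : μ = 1 ∨ μ = -1) (α : Rg μ) :
    ∃ n : ℤ, Q μ α = (n : ℝ) := by
  obtain ⟨a, b, c, d, rfl⟩ := exists_eq_cubic_tau α
  obtain ⟨w₁, w₂, hroots, hw₁, hw₂, hsum, hprod⟩ :=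
    exists_roots_map_P_eq (μ := μ) (by rcases hμ with rfl | rfl <;> norm_num)
  have hsq := sq_add_sq_of_add_eq_of_mul_eq hsum hprod
  have hcube := pow_three_add_pow_three_of_add_eq_of_mul_eq hsum hprod
  refine ⟨2 * (a ^ 2 + 2 * b ^ 2 + 4 * c ^ 2 + 8 * d ^ 2) + μ * (a * b + 2 * b * c + 4 * c * d)
    + μ ^ 2 * (a * c + 2 * b * d) + (μ ^ 3 + 6 * μ) * (a * d), ?_⟩
  rw [Q_cubic_tau, hroots]
  simp only [Multiset.insert_eq_cons, Multiset.map_cons, Multiset.map_singleton,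
    Multiset.sum_cons, Multiset.sum_singleton, norm_cubic_conj]
  apply Complex.ofReal_injective
  push_cast
  rw [ofReal_norm_cubic_sq, ofReal_norm_cubic_sq, cubic_mul_cubic_of_mul_eq _ _ _ _ hw₁,
    cubic_mul_cubic_of_mul_eq _ _ _ _ hw₂]
  linear_combination (a * b + 2 * b * c + 4 * c * d - 6 * (a * d) : ℂ) * hsum
    + (a * c + 2 * b * d : ℂ) * hsq + (a * d : ℂ) * hcube
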